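/- Under the same hypotheses, sup over w ∈ V of (−a(w + 2v, w) + 2 l(w)) equals a(u−v, u−v) for every v ∈ V. -/

import Mathlib

/-! Completing the square with `a u = l` turns `-a (w + 2 v) w + 2 l w` into
`a (u - v) (u - v) - a (u - v - w) (u - v - w)`; coercivity makes the subtracted term
nonnegative, and it vanishes at `w = u - v`. -/

theorem LinearMap.apply_self_sub_apply_sub_self {R M : Type*} [CommRing R] [AddCommGroup M]
    [Module R M] (a : M →ₗ[R] M →ₗ[R] R) (hsymm : ∀ v w : M, a v w = a w v) (e w : M) :
    a e e - a (e - w) (e - w) = 2 * a e w - a w w := by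
  simp only [map_sub, LinearMap.sub_apply, hsymm w e]
  ring

theorem minorant_sup_equals_energy_error_general {V : Type*} [NormedAddCommGroup V]
    [InnerProductSpace ℝ V]
    (a : V →ₗ[ℝ] V →ₗ[ℝ] ℝ) (l : V →L[ℝ] ℝ)
    (hsymm : ∀ v w : V, a v w = a w v)
    (hcoer : ∃ c > 0, ∀ v : V, c * ‖v‖ ^ 2 ≤ a v v)
    (u : V) (hu : ∀ w : V, a u w = l w) :
    ∀ v : V,
      IsGreatest {r : ℝ | ∃ w : V, r = -(a (w + (2 : ℝ) • v) w) + 2 * l w}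
        (a (u - v) (u - v)) := by
  obtain ⟨c, hc, hcoer⟩ := hcoer
  have hnonneg (x : V) : 0 ≤ a x x := le_trans (by positivity) (hcoer x)
  intro v
  have hgap (w : V) : -(a (w + (2 : ℝ) • v) w) + 2 * l w
      = a (u - v) (u - v) - a (u - v - w) (u - v - w) := by
    rw [a.apply_self_sub_apply_sub_self hsymm, ← hu w]
    simp only [map_add, map_sub, map_smul, LinearMap.add_apply, LinearMap.sub_apply,
      LinearMap.smul_apply, smul_eq_mul]
    ring
  refine ⟨⟨u - v, ?_⟩, ?_⟩
  · rw [hgap, sub_self]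
    simp
  · rintro r ⟨w, rfl⟩
    rw [hgap]
    linarith [hnonneg (u - v - w)]

theorem minorant_sup_equals_energy_error {V : Type*} [NormedAddCommGroup V]
    [InnerProductSpace ℝ V] [CompleteSpace V]
    (a : V →ₗ[ℝ] V →ₗ[ℝ] ℝ) (l : V →L[ℝ] ℝ)
    (hsymm : ∀ v w : V, a v w = a w v)
    (hcoer : ∃ c > 0, ∀ v : V, c * ‖v‖ ^ 2 ≤ a v v)
    (hbdd : ∃ C : ℝ, ∀ v w : V, |a v w| ≤ C * ‖v‖ * ‖w‖)
    (u : V) (hu : ∀ w : V, a u w = l w) :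
    ∀ v : V,
      IsGreatest {r : ℝ | ∃ w : V, r = -(a (w + (2 : ℝ) • v) w) + 2 * l w}
        (a (u - v) (u - v)) :=
  minorant_sup_equals_energy_error_general a l hsymm hcoer u hu
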